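/- A complex irrational ζ ∈ ℂ \ ℚ(i) is badly approximable (there exists C > 0 with |ζ - p/q| > C/|q|² for all p, q ∈ ℤ[i], q ≠ 0) if and only if its Hurwitz continued fraction partial quotients (a_n)_{n≥0} are bounded. -/

import Mathlib

open Complex Filter

/-- `z` is a Gaussian integer (as a complex number). -/
def IsGaussianInt (z : ℂ) : Prop := ∃ m n : ℤ, z = (m : ℂ) + (n : ℂ) * I

/-- `z` belongs to `ℚ(i)`. -/
def IsGaussianRational (z : ℂ) : Prop :=
  ∃ p q : ℂ, IsGaussianInt p ∧ IsGaussianInt q ∧ q ≠ 0 ∧ z = p / q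

/-- The fundamental domain `𝔉`. -/
def InFund (z : ℂ) : Prop :=
  -(1/2) ≤ z.re ∧ z.re < 1/2 ∧ -(1/2) ≤ z.im ∧ z.im < 1/2

/-- Nearest Gaussian integer. -/
noncomputable def nearGauss (z : ℂ) : ℂ :=
  (⌊z.re + 1/2⌋ : ℤ) + (⌊z.im + 1/2⌋ : ℤ) * I

/-- Complete quotients of the Hurwitz continued fraction of `z`. -/
noncomputable def hcfZ (z : ℂ) : ℕ → ℂ
  | 0 => z
  | n + 1 => 1 / (hcfZ z n - nearGauss (hcfZ z n))

/-- Partial quotients of the Hurwitz continued fraction of `z`. -/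
noncomputable def hcfA (z : ℂ) (n : ℕ) : ℂ := nearGauss (hcfZ z n)

/-- Numerators: `hcfP z (n+2) = p n`, with `p (-2) = 0`, `p (-1) = 1`. -/
noncomputable def hcfP (z : ℂ) : ℕ → ℂ
  | 0 => 0
  | 1 => 1
  | n + 2 => hcfA z n * hcfP z (n + 1) + hcfP z n

/-- Denominators: `hcfQ z (n+2) = q n`, with `q (-2) = 1`, `q (-1) = 0`. -/
noncomputable def hcfQ (z : ℂ) : ℕ → ℂ
  | 0 => 1
  | 1 => 0
  | n + 2 => hcfA z n * hcfQ z (n + 1) + hcfQ z n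

/-!
Write `L n = Q n ζ - P n` for the errors of the convergents (indices shifted as in `hcfP`,
`hcfQ`). They satisfy `L (n+1) z n = -L n` and a determinant identity, and `|z (n+1)|² ≥ 2`
because `|z n - a n|² ≤ 1/2`. The quantity `e n = (-1)^n Q (n+1) L n` obeys
`e (n+1) z n z (n+1) = z n z (n+1) - e n`; as `|z n z (n+1)| ≥ 2` for `n ≥ 1`, this yields
Lakein's estimate `|Q (n+1) L n| ≤ 2`, and also `e (n+1) ≠ 0`, so that `Q (n+2) ≠ 0`.

If `C < |q| |q ζ - p|` for all `p/q`, then applying it to the convergents gives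
`C |z (n+1)| < |z (n+1)| |Q (n+2)| |L (n+2)| = |Q (n+2)| |L (n+1)| ≤ 2`, which bounds `a (n+1)`.
Conversely, if `|z n| ≤ K` and `p/q` is given, pick `n` with `|L (n+2)| ≤ 1/(4|q|) < |L (n+1)|`,
so `|Q (n+2)| < 8|q|`. Writing `(q, p)` in the unimodular basis formed by two consecutive
convergents, `q ζ - p = α L (n+2) + β L (n+1)` with `α, β ∈ ℤ[i]` and
`±β = Q (n+2) (q ζ - p) - q L (n+2)`. Unless `16 K |q| |q ζ - p| ≥ 1`, this forces `|β| < 1`,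
hence `β = 0`, and then `|q ζ - p| ≥ |L (n+2)| ≥ |L (n+1)| / K > 1 / (4 K |q|)`.
-/

lemma isGaussianInt_iff_mem_range {z : ℂ} :
    IsGaussianInt z ↔ z ∈ GaussianInt.toComplex.range := by
  constructor
  · rintro ⟨m, n, rfl⟩
    exact ⟨⟨m, n⟩, GaussianInt.toComplex_def' m n⟩
  · rintro ⟨x, rfl⟩
    exact ⟨x.re, x.im, GaussianInt.toComplex_def x⟩

lemma isGaussianInt_zero : IsGaussianInt 0 :=
  isGaussianInt_iff_mem_range.mpr (zero_mem _)

lemma isGaussianInt_one : IsGaussianInt 1 :=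
  isGaussianInt_iff_mem_range.mpr (one_mem _)

lemma isGaussianInt_nearGauss (z : ℂ) : IsGaussianInt (nearGauss z) := ⟨_, _, rfl⟩

namespace IsGaussianInt

variable {a b : ℂ}

lemma add (ha : IsGaussianInt a) (hb : IsGaussianInt b) : IsGaussianInt (a + b) := by
  rw [isGaussianInt_iff_mem_range] at *
  exact add_mem ha hb

lemma mul (ha : IsGaussianInt a) (hb : IsGaussianInt b) : IsGaussianInt (a * b) := by
  rw [isGaussianInt_iff_mem_range] at *
  exact mul_mem ha hb

lemma sub (ha : IsGaussianInt a) (hb : IsGaussianInt b) : IsGaussianInt (a - b) := by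
  rw [isGaussianInt_iff_mem_range] at *
  exact sub_mem ha hb

lemma neg_one_pow (n : ℕ) : IsGaussianInt ((-1) ^ n) :=
  isGaussianInt_iff_mem_range.mpr (pow_mem (neg_mem (one_mem _)) n)

lemma one_le_norm (ha : IsGaussianInt a) (h0 : a ≠ 0) : 1 ≤ ‖a‖ := by
  obtain ⟨x, rfl⟩ := isGaussianInt_iff_mem_range.mp ha
  have hx : x ≠ 0 := by
    rintro rfl
    exact h0 (map_zero _)
  have hsq : (1 : ℝ) ≤ ‖GaussianInt.toComplex x‖ ^ 2 := by
    rw [Complex.sq_norm, ← GaussianInt.intCast_real_norm]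
    exact_mod_cast GaussianInt.norm_pos.mpr hx
  nlinarith [norm_nonneg (GaussianInt.toComplex x)]

lemma eq_zero_of_norm_lt_one (ha : IsGaussianInt a) (h : ‖a‖ < 1) : a = 0 := by
  by_contra h0
  exact (ha.one_le_norm h0).not_gt h

lemma isGaussianRational (ha : IsGaussianInt a) : IsGaussianRational a :=
  ⟨a, 1, ha, isGaussianInt_one, one_ne_zero, (div_one a).symm⟩

end IsGaussianInt

namespace IsGaussianRational

variable {z a : ℂ}

lemma add_isGaussianInt (hz : IsGaussianRational z) (ha : IsGaussianInt a) :
    IsGaussianRational (z + a) := by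
  obtain ⟨p, q, hp, hq, hq0, rfl⟩ := hz
  exact ⟨p + a * q, q, hp.add (ha.mul hq), hq, hq0, by field_simp⟩

lemma one_div (hz : IsGaussianRational z) : IsGaussianRational (1 / z) := by
  obtain ⟨p, q, hp, hq, hq0, rfl⟩ := hz
  by_cases hp0 : p = 0
  · simpa [hp0] using isGaussianInt_zero.isGaussianRational
  · exact ⟨q, p, hq, hp, hp0, one_div_div p q⟩

end IsGaussianRational

lemma norm_sub_nearGauss_sq_le (z : ℂ) : ‖z - nearGauss z‖ ^ 2 ≤ 1 / 2 := by
  have hre : |(z - nearGauss z).re| ≤ 1 / 2 := by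
    simpa [nearGauss, round_eq] using abs_sub_round z.re
  have him : |(z - nearGauss z).im| ≤ 1 / 2 := by
    simpa [nearGauss, round_eq] using abs_sub_round z.im
  rw [Complex.sq_norm, Complex.normSq_apply]
  nlinarith [abs_mul_abs_self (z - nearGauss z).re, abs_mul_abs_self (z - nearGauss z).im,
    abs_nonneg (z - nearGauss z).re, abs_nonneg (z - nearGauss z).im]

lemma norm_sub_nearGauss_le_one (z : ℂ) : ‖z - nearGauss z‖ ≤ 1 := by
  nlinarith [norm_sub_nearGauss_sq_le z, norm_nonneg (z - nearGauss z)]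

lemma div_sq_lt_norm_sub_div_iff {C : ℝ} {ζ p q : ℂ} (hq0 : q ≠ 0) :
    C / ‖q‖ ^ 2 < ‖ζ - p / q‖ ↔ C < ‖q‖ * ‖q * ζ - p‖ := by
  have hq : 0 < ‖q‖ := norm_pos_iff.mpr hq0
  rw [show ζ - p / q = (q * ζ - p) / q by field_simp, norm_div,
    div_lt_div_iff₀ (by positivity) hq]
  constructor <;> intro h <;> nlinarith

section HurwitzContinuedFraction

variable {ζ : ℂ}

lemma not_isGaussianRational_hcfZ (hζ : ¬ IsGaussianRational ζ) :
    ∀ n, ¬ IsGaussianRational (hcfZ ζ n)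
  | 0 => hζ
  | n + 1 => fun h => not_isGaussianRational_hcfZ hζ n <| by
      simpa [hcfZ] using h.one_div.add_isGaussianInt (isGaussianInt_nearGauss (hcfZ ζ n))

lemma hcfZ_sub_hcfA_ne_zero (hζ : ¬ IsGaussianRational ζ) (n : ℕ) :
    hcfZ ζ n - hcfA ζ n ≠ 0 := fun h =>
  not_isGaussianRational_hcfZ hζ n <|
    sub_eq_zero.mp h ▸ (isGaussianInt_nearGauss _).isGaussianRational

lemma hcfZ_succ_mul_sub (hζ : ¬ IsGaussianRational ζ) (n : ℕ) :
    hcfZ ζ (n + 1) * (hcfZ ζ n - hcfA ζ n) = 1 :=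
  one_div_mul_cancel (hcfZ_sub_hcfA_ne_zero hζ n)

lemma two_le_norm_hcfZ_succ_sq (hζ : ¬ IsGaussianRational ζ) (n : ℕ) :
    2 ≤ ‖hcfZ ζ (n + 1)‖ ^ 2 := by
  have h := congrArg (‖·‖ ^ 2) (hcfZ_succ_mul_sub hζ n)
  simp only [norm_mul, mul_pow, norm_one, one_pow] at h
  have hu : ‖hcfZ ζ n - hcfA ζ n‖ ^ 2 ≤ 1 / 2 := norm_sub_nearGauss_sq_le _
  have hu0 : 0 < ‖hcfZ ζ n - hcfA ζ n‖ ^ 2 := by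
    have := hcfZ_sub_hcfA_ne_zero hζ n
    positivity
  nlinarith

lemma one_lt_norm_hcfZ_succ (hζ : ¬ IsGaussianRational ζ) (n : ℕ) :
    1 < ‖hcfZ ζ (n + 1)‖ := by
  nlinarith [two_le_norm_hcfZ_succ_sq hζ n, norm_nonneg (hcfZ ζ (n + 1))]

lemma two_le_norm_hcfZ_succ_mul (hζ : ¬ IsGaussianRational ζ) (n : ℕ) :
    2 ≤ ‖hcfZ ζ (n + 1) * hcfZ ζ (n + 2)‖ := by
  have h1 := two_le_norm_hcfZ_succ_sq hζ n
  have h2 := two_le_norm_hcfZ_succ_sq hζ (n + 1)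
  rw [norm_mul]
  nlinarith [norm_nonneg (hcfZ ζ (n + 1)), norm_nonneg (hcfZ ζ (n + 2)),
    mul_nonneg (norm_nonneg (hcfZ ζ (n + 1))) (norm_nonneg (hcfZ ζ (n + 2)))]

lemma hcfA_succ_ne_zero (hζ : ¬ IsGaussianRational ζ) (n : ℕ) : hcfA ζ (n + 1) ≠ 0 := by
  intro h
  have hu : ‖hcfZ ζ (n + 1) - hcfA ζ (n + 1)‖ ^ 2 ≤ 1 / 2 := norm_sub_nearGauss_sq_le _
  rw [h, sub_zero] at hu
  linarith [two_le_norm_hcfZ_succ_sq hζ n]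

lemma abs_norm_hcfZ_sub_norm_hcfA_le (n : ℕ) : |‖hcfZ ζ n‖ - ‖hcfA ζ n‖| ≤ 1 :=
  (abs_norm_sub_norm_le _ _).trans (norm_sub_nearGauss_le_one _)

lemma isGaussianInt_hcfP : ∀ n, IsGaussianInt (hcfP ζ n)
  | 0 => isGaussianInt_zero
  | 1 => isGaussianInt_one
  | n + 2 => ((isGaussianInt_nearGauss _).mul (isGaussianInt_hcfP (n + 1))).add
      (isGaussianInt_hcfP n)

lemma isGaussianInt_hcfQ : ∀ n, IsGaussianInt (hcfQ ζ n)
  | 0 => isGaussianInt_one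
  | 1 => isGaussianInt_zero
  | n + 2 => ((isGaussianInt_nearGauss _).mul (isGaussianInt_hcfQ (n + 1))).add
      (isGaussianInt_hcfQ n)

/-- `hcfErr z (n + 2) = q n z - p n`, the error of the `n`-th convergent. -/
noncomputable def hcfErr (z : ℂ) (n : ℕ) : ℂ := hcfQ z n * z - hcfP z n

/-- Since `e (n+1) z n z (n+1) = z n z (n+1) - e n` (`hcfE_succ_mul`), this is the quantity
that stays bounded when `|z n z (n+1)| ≥ 2`. -/
noncomputable def hcfE (z : ℂ) (n : ℕ) : ℂ := (-1) ^ n * (hcfQ z (n + 1) * hcfErr z n)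

lemma hcfErr_one : hcfErr ζ 1 = -1 := by simp [hcfErr, hcfQ, hcfP]

lemma hcfErr_add_two (n : ℕ) :
    hcfErr ζ (n + 2) = hcfA ζ n * hcfErr ζ (n + 1) + hcfErr ζ n := by
  simp only [hcfErr, hcfQ, hcfP]
  ring

lemma hcfErr_succ_mul_hcfZ (hζ : ¬ IsGaussianRational ζ) :
    ∀ n, hcfErr ζ (n + 1) * hcfZ ζ n = -hcfErr ζ n
  | 0 => by simp [hcfErr, hcfQ, hcfP, hcfZ]
  | n + 1 => by
    rw [hcfErr_add_two]
    linear_combination hcfZ ζ (n + 1) * hcfErr_succ_mul_hcfZ hζ n -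
      hcfErr ζ (n + 1) * hcfZ_succ_mul_sub hζ n

lemma norm_hcfErr_succ_mul_norm_hcfZ (hζ : ¬ IsGaussianRational ζ) (n : ℕ) :
    ‖hcfErr ζ (n + 1)‖ * ‖hcfZ ζ n‖ = ‖hcfErr ζ n‖ := by
  rw [← norm_mul, hcfErr_succ_mul_hcfZ hζ, norm_neg]

lemma hcfQ_mul_hcfErr_sub : ∀ n,
    hcfQ ζ (n + 1) * hcfErr ζ n - hcfQ ζ n * hcfErr ζ (n + 1) = (-1) ^ n
  | 0 => by simp [hcfErr, hcfQ, hcfP]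
  | n + 1 => by
    rw [hcfErr_add_two, hcfQ, pow_succ]
    linear_combination -hcfQ_mul_hcfErr_sub n

lemma norm_hcfErr_succ_sq_le (hζ : ¬ IsGaussianRational ζ) :
    ∀ n, ‖hcfErr ζ (n + 1)‖ ^ 2 ≤ (1 / 2) ^ n
  | 0 => by simp [hcfErr_one]
  | n + 1 => by
    have hstep := congrArg (· ^ 2) (norm_hcfErr_succ_mul_norm_hcfZ hζ (n + 1))
    have hz := mul_le_mul_of_nonneg_left (two_le_norm_hcfZ_succ_sq hζ n)
      (sq_nonneg ‖hcfErr ζ (n + 2)‖)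
    simp only [mul_pow] at hstep
    show ‖hcfErr ζ (n + 2)‖ ^ 2 ≤ (1 / 2) ^ (n + 1)
    rw [pow_succ (1 / 2 : ℝ) n]
    nlinarith [norm_hcfErr_succ_sq_le hζ n]

lemma exists_norm_hcfErr_succ_le (hζ : ¬ IsGaussianRational ζ) {ε : ℝ} (hε : 0 < ε) :
    ∃ n, ‖hcfErr ζ (n + 1)‖ ≤ ε := by
  obtain ⟨n, hn⟩ := exists_pow_lt_of_lt_one (pow_pos hε 2) (by norm_num : (1 / 2 : ℝ) < 1)
  exact ⟨n, (pow_le_pow_iff_left₀ (norm_nonneg _) hε.le two_ne_zero).mp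
    ((norm_hcfErr_succ_sq_le hζ n).trans hn.le)⟩

lemma hcfE_one : hcfE ζ 1 = 1 := by simp [hcfE, hcfErr, hcfQ, hcfP]

lemma hcfE_succ_mul (hζ : ¬ IsGaussianRational ζ) (n : ℕ) :
    hcfE ζ (n + 1) * (hcfZ ζ n * hcfZ ζ (n + 1)) = hcfZ ζ n * hcfZ ζ (n + 1) - hcfE ζ n := by
  have hsq : ((-1 : ℂ) ^ n) ^ 2 = 1 := by rw [← pow_mul, mul_comm, pow_mul]; norm_num
  simp only [hcfE, pow_succ]
  linear_combination hcfZ ζ n * hcfZ ζ (n + 1) * hsq -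
    (-1) ^ n * hcfZ ζ n * hcfZ ζ (n + 1) * hcfQ_mul_hcfErr_sub (ζ := ζ) (n + 1) -
    (-1) ^ n * hcfQ ζ (n + 1) * hcfZ ζ n * hcfErr_succ_mul_hcfZ hζ (n + 1) +
    (-1) ^ n * hcfQ ζ (n + 1) * hcfErr_succ_mul_hcfZ hζ n

lemma norm_hcfE_succ_le_two (hζ : ¬ IsGaussianRational ζ) : ∀ n, ‖hcfE ζ (n + 1)‖ ≤ 2
  | 0 => by simp [hcfE_one]
  | n + 1 => by
    have h := congrArg norm (hcfE_succ_mul hζ (n + 1))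
    have hA := two_le_norm_hcfZ_succ_mul hζ n
    rw [norm_mul] at h
    nlinarith [norm_sub_le (hcfZ ζ (n + 1) * hcfZ ζ (n + 2)) (hcfE ζ (n + 1)),
      norm_hcfE_succ_le_two hζ n, norm_nonneg (hcfE ζ (n + 2))]

lemma norm_one_sub_hcfE_succ_le_one (hζ : ¬ IsGaussianRational ζ) :
    ∀ n, ‖1 - hcfE ζ (n + 1)‖ ≤ 1
  | 0 => by simp [hcfE_one]
  | n + 1 => by
    have h : (1 - hcfE ζ (n + 2)) * (hcfZ ζ (n + 1) * hcfZ ζ (n + 2)) = hcfE ζ (n + 1) := by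
      linear_combination -hcfE_succ_mul hζ (n + 1)
    have h' := congrArg norm h
    rw [norm_mul] at h'
    nlinarith [two_le_norm_hcfZ_succ_mul hζ n, norm_hcfE_succ_le_two hζ n,
      norm_nonneg (1 - hcfE ζ (n + 2))]

/-- Lakein's estimate `|q n (q (n-1) ζ - p (n-1))| ≤ 2`. -/
lemma norm_hcfQ_succ_mul_norm_hcfErr_le (hζ : ¬ IsGaussianRational ζ) (n : ℕ) :
    ‖hcfQ ζ (n + 1)‖ * ‖hcfErr ζ n‖ ≤ 2 := by
  cases n with
  | zero => simp [hcfQ]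
  | succ n =>
    simpa [hcfE, norm_mul] using norm_hcfE_succ_le_two hζ n

/-- `e (n+2) = 0` would make `z (n+1) z (n+2) - 1 = a (n+1) z (n+2)`, of norm `> 1`,
equal to `e (n+1) - 1`, of norm `≤ 1`. -/
lemma hcfE_succ_ne_zero (hζ : ¬ IsGaussianRational ζ) : ∀ n, hcfE ζ (n + 1) ≠ 0
  | 0 => by simp [hcfE_one]
  | n + 1 => by
    intro h0
    have hA : hcfZ ζ (n + 1) * hcfZ ζ (n + 2) - 1 = hcfA ζ (n + 1) * hcfZ ζ (n + 2) := by
      linear_combination hcfZ_succ_mul_sub hζ (n + 1)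
    have hE : hcfZ ζ (n + 1) * hcfZ ζ (n + 2) - 1 = -(1 - hcfE ζ (n + 1)) := by
      linear_combination -hcfE_succ_mul hζ (n + 1) + (hcfZ ζ (n + 1) * hcfZ ζ (n + 2)) * h0
    have h1 : 1 ≤ ‖hcfA ζ (n + 1)‖ :=
      (isGaussianInt_nearGauss _).one_le_norm (hcfA_succ_ne_zero hζ n)
    have h2 := one_lt_norm_hcfZ_succ hζ (n + 1)
    have h3 := norm_one_sub_hcfE_succ_le_one hζ n
    rw [hE] at hA
    have := congrArg norm hA
    rw [norm_neg, norm_mul] at this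
    nlinarith

lemma hcfQ_add_two_ne_zero (hζ : ¬ IsGaussianRational ζ) (n : ℕ) : hcfQ ζ (n + 2) ≠ 0 := by
  intro h0
  apply hcfE_succ_ne_zero hζ n
  simp [hcfE, h0]

/-- `(q, p)` in the basis of two consecutive convergents, which is unimodular by
`hcfQ_mul_hcfErr_sub`. -/
lemma exists_hcf_coords (n : ℕ) {p q : ℂ} (hp : IsGaussianInt p) (hq : IsGaussianInt q) :
    ∃ α β : ℂ, IsGaussianInt α ∧ IsGaussianInt β ∧
      q = α * hcfQ ζ (n + 1) + β * hcfQ ζ n ∧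
      q * ζ - p = α * hcfErr ζ (n + 1) + β * hcfErr ζ n := by
  have hdet := hcfQ_mul_hcfErr_sub (ζ := ζ) n
  have hsq : ((-1 : ℂ) ^ n) ^ 2 = 1 := by rw [← pow_mul, mul_comm, pow_mul]; norm_num
  simp only [hcfErr] at hdet ⊢
  refine ⟨(-1) ^ n * (p * hcfQ ζ n - q * hcfP ζ n), (-1) ^ n * (q * hcfP ζ (n + 1) -
    p * hcfQ ζ (n + 1)), (IsGaussianInt.neg_one_pow n).mul
      ((hp.mul (isGaussianInt_hcfQ n)).sub (hq.mul (isGaussianInt_hcfP n))),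
    (IsGaussianInt.neg_one_pow n).mul
      ((hq.mul (isGaussianInt_hcfP (n + 1))).sub (hp.mul (isGaussianInt_hcfQ (n + 1)))),
    ?_, ?_⟩
  · linear_combination -(-1) ^ n * q * hdet - q * hsq
  · linear_combination -(-1) ^ n * (q * ζ - p) * hdet - (q * ζ - p) * hsq

lemma norm_hcfZ_succ_mul_le (hζ : ¬ IsGaussianRational ζ) (n : ℕ) :
    ‖hcfZ ζ (n + 1)‖ * (‖hcfQ ζ (n + 2)‖ * ‖hcfErr ζ (n + 2)‖) ≤ 2 :=
  calc _ = ‖hcfQ ζ (n + 2)‖ * (‖hcfErr ζ (n + 2)‖ * ‖hcfZ ζ (n + 1)‖) := by ring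
    _ = ‖hcfQ ζ (n + 2)‖ * ‖hcfErr ζ (n + 1)‖ := by rw [norm_hcfErr_succ_mul_norm_hcfZ hζ]
    _ ≤ 2 := norm_hcfQ_succ_mul_norm_hcfErr_le hζ (n + 1)

lemma norm_hcfA_succ_le_of_lt_norm_mul_norm_sub (hζ : ¬ IsGaussianRational ζ) {C : ℝ}
    (hC : 0 < C) (hbad : ∀ p q : ℂ, IsGaussianInt p → IsGaussianInt q → q ≠ 0 →
      C < ‖q‖ * ‖q * ζ - p‖) (n : ℕ) :
    ‖hcfA ζ (n + 1)‖ ≤ 2 / C + 1 := by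
  have hlt : C < ‖hcfQ ζ (n + 2)‖ * ‖hcfErr ζ (n + 2)‖ :=
    hbad _ _ (isGaussianInt_hcfP _) (isGaussianInt_hcfQ _) (hcfQ_add_two_ne_zero hζ n)
  have hz : ‖hcfZ ζ (n + 1)‖ ≤ 2 / C := by
    rw [le_div_iff₀ hC]
    nlinarith [norm_hcfZ_succ_mul_le hζ n, norm_nonneg (hcfZ ζ (n + 1))]
  linarith [(abs_le.mp (abs_norm_hcfZ_sub_norm_hcfA_le (ζ := ζ) (n + 1))).1]

lemma one_le_mul_norm_mul_norm_sub_of_norm_hcfZ_le (hζ : ¬ IsGaussianRational ζ) {K : ℝ}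
    (hK : 1 ≤ K) (hz : ∀ n, ‖hcfZ ζ n‖ ≤ K) {p q : ℂ} (hp : IsGaussianInt p)
    (hq : IsGaussianInt q) (hq0 : q ≠ 0) :
    1 ≤ 16 * K * (‖q‖ * ‖q * ζ - p‖) := by
  by_contra! hsmall
  have hq1 : 1 ≤ ‖q‖ := hq.one_le_norm hq0
  obtain ⟨n, hL1, hL2⟩ := Nat.exists_not_and_succ_of_not_zero_of_exists
    (p := fun k => 4 * ‖q‖ * ‖hcfErr ζ (k + 1)‖ ≤ 1)
    (by norm_num [hcfErr_one]; linarith) <| by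
      obtain ⟨n, hn⟩ := exists_norm_hcfErr_succ_le hζ (ε := 1 / (4 * ‖q‖)) (by positivity)
      exact ⟨n, by rwa [le_div_iff₀' (by positivity)] at hn⟩
  simp only [not_le] at hL1 hL2
  obtain ⟨α, β, hα, hβ, hqαβ, hLαβ⟩ := exists_hcf_coords (ζ := ζ) (n + 1) hp hq
  have hβ_eq : β * (-1) ^ (n + 1) =
      hcfQ ζ (n + 2) * (q * ζ - p) - q * hcfErr ζ (n + 2) := by
    linear_combination -β * hcfQ_mul_hcfErr_sub (ζ := ζ) (n + 1) - hcfQ ζ (n + 2) * hLαβ +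
      hcfErr ζ (n + 2) * hqαβ
  have hQ : ‖hcfQ ζ (n + 2)‖ ≤ 8 * ‖q‖ := by
    nlinarith [norm_hcfQ_succ_mul_norm_hcfErr_le hζ (n + 1), norm_nonneg (hcfQ ζ (n + 2))]
  have hβ0 : β = 0 := hβ.eq_zero_of_norm_lt_one <|
    calc ‖β‖ = ‖hcfQ ζ (n + 2) * (q * ζ - p) - q * hcfErr ζ (n + 2)‖ := by
          rw [← hβ_eq, norm_mul, norm_pow, norm_neg, norm_one, one_pow, mul_one]
      _ ≤ ‖hcfQ ζ (n + 2)‖ * ‖q * ζ - p‖ + ‖q‖ * ‖hcfErr ζ (n + 2)‖ := by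
          exact (norm_sub_le _ _).trans_eq (by rw [norm_mul, norm_mul])
      _ < 1 := by
          nlinarith [mul_le_mul_of_nonneg_right hQ (norm_nonneg (q * ζ - p))]
  rw [hβ0, zero_mul, add_zero] at hqαβ hLαβ
  have hα0 : α ≠ 0 := by
    rintro rfl
    exact hq0 (by simpa using hqαβ)
  have hA : ‖hcfErr ζ (n + 2)‖ ≤ ‖q * ζ - p‖ := by
    rw [hLαβ, norm_mul]
    exact le_mul_of_one_le_left (norm_nonneg _) (hα.one_le_norm hα0)
  have hK' : ‖hcfErr ζ (n + 1)‖ ≤ K * ‖hcfErr ζ (n + 2)‖ := by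
    rw [← norm_hcfErr_succ_mul_norm_hcfZ hζ (n + 1), mul_comm]
    exact mul_le_mul_of_nonneg_right (hz _) (norm_nonneg _)
  nlinarith [mul_le_mul_of_nonneg_left hA (by positivity : (0 : ℝ) ≤ 4 * ‖q‖ * K)]

end HurwitzContinuedFraction

/-- `ζ ∈ ℂ \ ℚ(i)` is badly approximable iff its HCF partial quotients
are bounded. -/
theorem bad_iff_bounded_pq (ζ : ℂ) (hζ : ¬ IsGaussianRational ζ) :
    (∃ C : ℝ, 0 < C ∧ ∀ p q : ℂ, IsGaussianInt p → IsGaussianInt q → q ≠ 0 →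
        C / ‖q‖ ^ 2 < ‖ζ - p / q‖) ↔
      (∃ M : ℝ, ∀ n : ℕ, ‖hcfA ζ n‖ ≤ M) := by
  constructor
  · rintro ⟨C, hC, hbad⟩
    refine ⟨max ‖hcfA ζ 0‖ (2 / C + 1), fun n => ?_⟩
    cases n with
    | zero => exact le_max_left _ _
    | succ n =>
      refine le_max_of_le_right (norm_hcfA_succ_le_of_lt_norm_mul_norm_sub hζ hC ?_ n)
      exact fun p q hp hq hq0 => (div_sq_lt_norm_sub_div_iff hq0).mp (hbad p q hp hq hq0)
  · rintro ⟨M, hM⟩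
    have hK : 1 ≤ M + 1 := by linarith [(norm_nonneg _).trans (hM 0)]
    have hz (n : ℕ) : ‖hcfZ ζ n‖ ≤ M + 1 := by
      linarith [hM n, (abs_le.mp (abs_norm_hcfZ_sub_norm_hcfA_le (ζ := ζ) n)).2]
    refine ⟨1 / (32 * (M + 1)), by positivity, fun p q hp hq hq0 => ?_⟩
    have hlower := one_le_mul_norm_mul_norm_sub_of_norm_hcfZ_le hζ hK hz hp hq hq0
    rw [div_sq_lt_norm_sub_div_iff hq0, div_lt_iff₀ (by positivity)]
    nlinarith
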